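/- arXiv:2409.03898 — 3 statements merged into one kernel-verified Lean document; each statement's English description precedes it below -/
import Mathlib

section
/- For all d, n₀, g ∈ ℤ⁺, the zipper gadget Z(d,n₀,g) with a single processor (k=1) and memory bound r = 2d+2 admits a pebbling strategy that uses no I/O moves and computes every node exactly once; consequently the optimal MPP cost with k=1 and r = 2d+2 equals n, the number of nodes of Z(d,n₀,g). -/
open scoped Classical

/-- A relation is a DAG edge relation if its transitive closure is irreflexive
(i.e., the directed graph is acyclic). -/
def IsDag {V : Type*} (E : V → V → Prop) : Prop := Irreflexive (Relation.TransGen E)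

namespace MPP

variable {V : Type*} [DecidableEq V] {k : ℕ}

/-- A configuration of multiprocessor red-blue pebbling: a set of red pebbles
for each of the `k` processors, and a set of blue pebbles. -/
structure Conf (V : Type*) (k : ℕ) where
  red : Fin k → Finset V
  blue : Finset V

/-- Moves of multiprocessor red-blue pebbling. `save`/`load` are the parallel I/O
moves (R1-M)/(R2-M), `compute` is (R3-M), and the removals are (R4-M). -/
inductive Move (V : Type*) (k : ℕ) where
  | save (m : ℕ) (f : Fin m → Fin k) (v : Fin m → V)
  | load (m : ℕ) (f : Fin m → Fin k) (v : Fin m → V)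
  | compute (m : ℕ) (f : Fin m → Fin k) (v : Fin m → V)
  | removeRed (j : Fin k) (x : V)
  | removeBlue (x : V)

/-- Add, for each `i`, the node `v i` to the red pebbles of processor `f i`. -/
def addRed (C : Conf V k) {m : ℕ} (f : Fin m → Fin k) (v : Fin m → V) :
    Fin k → Finset V :=
  fun j => C.red j ∪ (Finset.univ.filter (fun i => f i = j)).image v

/-- The effect of a move on a configuration. -/
def apply : Move V k → Conf V k → Conf V k
  | .save _ _ v, C => ⟨C.red, C.blue ∪ Finset.univ.image v⟩
  | .load _ f v, C => ⟨addRed C f v, C.blue⟩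
  | .compute _ f v, C => ⟨addRed C f v, C.blue⟩
  | .removeRed j x, C => ⟨Function.update C.red j (C.red j \ {x}), C.blue⟩
  | .removeBlue x, C => ⟨C.red, C.blue \ {x}⟩

/-- When a move may legally be performed in a given configuration. -/
def Legal (E : V → V → Prop) : Conf V k → Move V k → Prop
  | C, .save m f v => m ≤ k ∧ Function.Injective f ∧ ∀ i, v i ∈ C.red (f i)
  | C, .load m f v => m ≤ k ∧ Function.Injective f ∧ ∀ i, v i ∈ C.blue
  | C, .compute m f v =>
      m ≤ k ∧ Function.Injective f ∧ ∀ i, ∀ u, E u (v i) → u ∈ C.red (f i)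
  | _, .removeRed _ _ => True
  | _, .removeBlue _ => True

/-- A configuration respects the fast-memory bound `r` for every processor. -/
def Valid (r : ℕ) (C : Conf V k) : Prop := ∀ j, (C.red j).card ≤ r

/-- `Run E r C ms C'` : starting from configuration `C`, the list of moves `ms`
may be legally executed (respecting the memory bound `r` throughout) and leads
to configuration `C'`. -/
inductive Run (E : V → V → Prop) (r : ℕ) : Conf V k → List (Move V k) → Conf V k → Prop
  | nil (C : Conf V k) : Run E r C [] C
  | cons {C C'' : Conf V k} {mv : Move V k} {ms : List (Move V k)} :
      Legal E C mv → Valid r (apply mv C) → Run E r (apply mv C) ms C'' →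
      Run E r C (mv :: ms) C''

/-- Cost of a single move: `g` for I/O, `1` for compute, `0` for removal. -/
def moveCost (g : ℕ) : Move V k → ℕ
  | .save .. => g
  | .load .. => g
  | .compute .. => 1
  | .removeRed .. => 0
  | .removeBlue .. => 0

/-- Total cost of a sequence of moves. -/
def cost (g : ℕ) (ms : List (Move V k)) : ℕ := (ms.map (moveCost g)).sum

def isIO : Move V k → Bool
  | .save .. => true
  | .load .. => true
  | _ => false

/-- The number of I/O moves in a sequence of moves. -/
def ioCount (ms : List (Move V k)) : ℕ := (ms.filter isIO).length

def isCompute : Move V k → Bool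
  | .compute .. => true
  | _ => false

/-- The number of compute moves in a sequence of moves. -/
def computeCount (ms : List (Move V k)) : ℕ := (ms.filter isCompute).length

/-- A sink of the DAG: a node with no outgoing edge. -/
def IsSink (E : V → V → Prop) (v : V) : Prop := ∀ u, ¬ E v u

/-- A terminal configuration: every sink carries at least one pebble. -/
def Terminal (E : V → V → Prop) (C : Conf V k) : Prop :=
  ∀ v, IsSink E v → v ∈ C.blue ∨ ∃ j, v ∈ C.red j

/-- The initial (all-empty) configuration. -/
def init (V : Type*) (k : ℕ) : Conf V k := ⟨fun _ => ∅, ∅⟩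

/-- `ms` is a pebbling strategy: a legal run from the empty configuration ending
in a terminal configuration. -/
def IsPebbling (E : V → V → Prop) (r : ℕ) (ms : List (Move V k)) : Prop :=
  ∃ Cf, Run E r (init V k) ms Cf ∧ Terminal E Cf

/-- The optimal (minimum) cost of a pebbling strategy with `k` processors,
memory bound `r` per processor, and I/O cost `g`. -/
noncomputable def optCost (E : V → V → Prop) (k r g : ℕ) : ℕ :=
  sInf {c | ∃ ms : List (Move V k), IsPebbling E r ms ∧ cost g ms = c}

/-- The minimum number of I/O moves among all minimum-cost pebbling strategies. -/
noncomputable def optIO (E : V → V → Prop) (k r g : ℕ) : ℕ :=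
  sInf {q | ∃ ms : List (Move V k),
    IsPebbling E r ms ∧ cost g ms = optCost E k r g ∧ ioCount ms = q}

/-- The maximum in-degree `Δ_in` of the DAG. -/
noncomputable def maxInDeg (E : V → V → Prop) [Fintype V] : ℕ :=
  Finset.univ.sup fun v => (Finset.univ.filter fun u => E u v).card

/-- The set of nodes computed by a move. -/
def computes : Move V k → Set V
  | .compute _ _ v => Set.range v
  | _ => ∅

/-- `x` is computed by the move at position `s` of `ms`. -/
def ComputedAt (ms : List (Move V k)) (s : ℕ) (x : V) : Prop :=
  ∃ mv, ms[s]? = some mv ∧ x ∈ computes mv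

/-- The set of nodes computed by some move strictly before position `t`. -/
def computedBefore (ms : List (Move V k)) (t : ℕ) : Set V :=
  {x | ∃ s < t, ComputedAt ms s x}

/-- `x` is ready at position `t`: it has not yet been computed, but all its
in-neighbors have been. -/
def Ready (E : V → V → Prop) (ms : List (Move V k)) (t : ℕ) (x : V) : Prop :=
  x ∉ computedBefore ms t ∧ ∀ u, E u x → u ∈ computedBefore ms t

/-- The number of nodes that are ready at position `t`. -/
noncomputable def readyCount (E : V → V → Prop) [Fintype V]
    (ms : List (Move V k)) (t : ℕ) : ℕ :=
  (Finset.univ.filter (Ready E ms t)).card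

end MPP

/-- Vertices of the zipper gadget `Z(d, n₀, g)`: input-group nodes `u j`
(`j < d` is group `S₁`, `d ≤ j < 2d` is group `S₂`), main-chain nodes `v i`
(0-based, so `v 0` is the paper's `v₁`), and chain nodes `w j t`
(`t = 0, …, 2g−1`) attached in front of `u j`. -/
inductive ZipV (d n₀ g : ℕ) where
  | u (j : Fin (2 * d))
  | v (i : Fin n₀)
  | w (j : Fin (2 * d)) (t : Fin (2 * g))
  deriving DecidableEq

/-- Edges of the zipper gadget `Z(d, n₀, g)`: the chain `w j 0 → … → w j (2g−1) → u j`
in front of each input node, the main chain `v 0 → v 1 → …`, and an edge from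
every node of `S₁` to `v i` for even `i` (the paper's odd `i`, 1-based) and from
every node of `S₂` to `v i` for odd `i`. -/
def ZipE (d n₀ g : ℕ) : ZipV d n₀ g → ZipV d n₀ g → Prop :=
  fun x y => match x, y with
  | .w j t, .w j' t' => j = j' ∧ (t' : ℕ) = (t : ℕ) + 1
  | .w j t, .u j' => j = j' ∧ (t : ℕ) = 2 * g - 1
  | .u j, .v i => ((j : ℕ) < d ∧ (i : ℕ) % 2 = 0) ∨ (d ≤ (j : ℕ) ∧ (i : ℕ) % 2 = 1)
  | .v i, .v i' => (i' : ℕ) = (i : ℕ) + 1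
  | _, _ => False

/-! Upper bound: compute the inputs one at a time, each by sliding a single pebble down the
chain `w j 0 → … → w j (2g-1) → u j`, and keep only the inputs (at most `2d + 1` pebbles);
then slide one pebble down the main chain, whose every node needs one of the two input groups,
all of which are still pebbled (`2d + 2` pebbles). There is no I/O and every node is computed
once, so the cost is `n`.

Lower bound: in any pebbling of a finite DAG every node is computed, since each node reaches a
sink and a node can only be computed after its predecessors. With one processor a compute move
computes one node, so the cost is at least `n`; a pebbling of cost `n` therefore computes every
node exactly once. -/

lemma isDag_of_rank_lt {V : Type*} {E : V → V → Prop} (rank : V → ℕ)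
    (hrank : ∀ x y, E x y → rank x < rank y) : IsDag E := fun x hx => by
  have key : ∀ {a b}, Relation.TransGen E a b → rank a < rank b := fun h =>
    h.trans_induction_on (hrank _ _) fun _ _ => lt_trans
  exact lt_irrefl _ (key hx)

lemma IsDag.exists_sink {V : Type*} [Finite V] {E : V → V → Prop} (hE : IsDag E) (x : V) :
    ∃ z, MPP.IsSink E z ∧ Relation.ReflTransGen E x z := by
  have : IsTrans V (flip (Relation.TransGen E)) := ⟨fun _ _ _ hab hbc => hbc.trans hab⟩
  have : Std.Irrefl (flip (Relation.TransGen E)) := ⟨hE⟩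
  induction x using (Finite.wellFounded_of_trans_of_irrefl (flip (Relation.TransGen E))).induction
    with
  | _ x ih =>
    by_cases hx : MPP.IsSink E x
    · exact ⟨x, hx, .refl⟩
    · obtain ⟨y, hxy⟩ := not_forall_not.mp hx
      obtain ⟨z, hz, hyz⟩ := ih y (.single hxy)
      exact ⟨z, hz, .head hxy hyz⟩

namespace MPP

variable {V : Type*} {k r : ℕ} {E : V → V → Prop}

def pebbles (C : Conf V k) : Set V := (⋃ j, (C.red j : Set V)) ∪ C.blue

def computedSet (ms : List (Move V k)) : Set V := ⋃ mv ∈ ms, computes mv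

def IsPredClosed (E : V → V → Prop) (K : Set V) : Prop := ∀ ⦃x u⦄, x ∈ K → E u x → u ∈ K

lemma mem_pebbles {C : Conf V k} {x : V} :
    x ∈ pebbles C ↔ (∃ j, x ∈ C.red j) ∨ x ∈ C.blue := by
  simp [pebbles]

lemma pebbles_init : pebbles (init V k) = ∅ := by
  simp [pebbles, init]

lemma pebbles_apply_subset [DecidableEq V] {C : Conf V k} {mv : Move V k} (h : Legal E C mv) :
    pebbles (apply mv C) ⊆ pebbles C ∪ computes mv := by
  intro x hx
  cases mv <;> simp [pebbles, apply, addRed, computes, Legal, Function.update_apply] at hx h ⊢ <;>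
    aesop

lemma Legal.mem_pebbles_of_mem_computes {C : Conf V k} {mv : Move V k} (h : Legal E C mv)
    {x u : V} (hx : x ∈ computes mv) (hu : E u x) : u ∈ pebbles C := by
  cases mv <;> simp only [computes, Set.mem_empty_iff_false, Set.mem_range] at hx
  obtain ⟨i, rfl⟩ := hx
  exact Or.inl (Set.mem_iUnion.mpr ⟨_, h.2.2 i u hu⟩)

lemma Run.pebbles_subset [DecidableEq V] {C C' : Conf V k} {ms : List (Move V k)}
    (h : Run E r C ms C') {K : Set V} (hC : pebbles C ⊆ K) (hK : IsPredClosed E K) :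
    pebbles C' ⊆ K ∪ computedSet ms ∧ IsPredClosed E (K ∪ computedSet ms) := by
  induction h generalizing K with
  | nil => simpa [computedSet] using ⟨hC, hK⟩
  | @cons C _ mv ms hlegal _ _ ih =>
    have hK' : IsPredClosed E (K ∪ computes mv) := by
      rintro x u (hx | hx) hu
      · exact Or.inl (hK hx hu)
      · exact Or.inl (hC (hlegal.mem_pebbles_of_mem_computes hx hu))
    have hset : K ∪ computes mv ∪ computedSet ms = K ∪ computedSet (mv :: ms) := by
      simp [computedSet, Set.union_assoc]
    rw [← hset]
    exact ih ((pebbles_apply_subset hlegal).trans (Set.union_subset_union_left _ hC)) hK'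

lemma IsPebbling.exists_computedAt [DecidableEq V] [Finite V] (hE : IsDag E)
    {ms : List (Move V k)} (h : IsPebbling E r ms) (x : V) : ∃ s, ComputedAt ms s x := by
  obtain ⟨Cf, hrun, hterm⟩ := h
  obtain ⟨hfinal, hclosed⟩ := hrun.pebbles_subset (K := ∅) (by simp [pebbles_init])
    (fun _ _ hx => absurd hx (Set.notMem_empty _))
  obtain ⟨z, hz, hxz⟩ := hE.exists_sink x
  have hzc : z ∈ computedSet ms := by
    simpa using hfinal (mem_pebbles.mpr (hterm z hz).symm)
  have hxc : x ∈ computedSet ms := by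
    induction hxz using Relation.ReflTransGen.head_induction_on with
    | refl => exact hzc
    | head hxy _ ih => simpa using hclosed (Or.inr ih) hxy
  simp only [computedSet, Set.mem_iUnion] at hxc
  obtain ⟨mv, hmv, hx⟩ := hxc
  obtain ⟨s, hs⟩ := List.mem_iff_getElem?.mp hmv
  exact ⟨s, mv, hs, hx⟩

lemma cost_append (g : ℕ) (ms ms' : List (Move V k)) :
    cost g (ms ++ ms') = cost g ms + cost g ms' := by
  simp [cost]

lemma cost_flatMap {α : Type*} (g : ℕ) (l : List α) (f : α → List (Move V k)) :
    cost g (l.flatMap f) = (l.map fun a => cost g (f a)).sum := by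
  induction l with
  | nil => rfl
  | cons a l ih => rw [List.flatMap_cons, cost_append, ih, List.map_cons, List.sum_cons]

lemma computeCount_le_cost (g : ℕ) (ms : List (Move V k)) : computeCount ms ≤ cost g ms := by
  induction ms with
  | nil => simp [computeCount, cost]
  | cons mv ms ih =>
    cases mv <;> simp_all [computeCount, cost, List.filter_cons, isCompute, moveCost] <;> omega

lemma ioCount_eq_zero_iff {ms : List (Move V k)} :
    ioCount ms = 0 ↔ ∀ mv ∈ ms, isIO mv = false := by
  simp [ioCount, List.filter_eq_nil_iff]

lemma isCompute_of_mem_computes {mv : Move V k} {x : V} (hx : x ∈ computes mv) :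
    isCompute mv = true := by
  cases mv <;> simp_all [computes, isCompute]

lemma computedAt_iff {ms : List (Move V k)} {s : ℕ} {x : V} :
    ComputedAt ms s x ↔ ∃ hs : s < ms.length, x ∈ computes ms[s] := by
  simp [ComputedAt, List.getElem?_eq_some_iff]

def computePositions (ms : List (Move V k)) : Finset (Fin ms.length) :=
  Finset.univ.filter fun s => isCompute ms[s]

lemma card_computePositions (ms : List (Move V k)) :
    (computePositions ms).card = computeCount ms := by
  rw [computeCount, ← List.countP_eq_length_filter]
  conv_rhs => rw [← List.map_getElem_finRange ms]
  simp only [computePositions, Fin.univ_def, Finset.card_def, Finset.filter_val,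
    Multiset.filter_coe, Multiset.coe_card, List.countP_eq_length_filter, List.filter_map,
    List.length_map, Bool.decide_eq_true, Function.comp_def, Fin.getElem_fin]

lemma Run.exists_legal_of_mem [DecidableEq V] {C C' : Conf V k} {ms : List (Move V k)}
    (h : Run E r C ms C') {mv : Move V k} (hmv : mv ∈ ms) : ∃ D, Legal E D mv := by
  induction h with
  | nil => simp at hmv
  | cons hlegal _ _ ih =>
    rcases List.mem_cons.mp hmv with rfl | hmv
    exacts [⟨_, hlegal⟩, ih hmv]

lemma Legal.computes_subsingleton {D : Conf V 1} {mv : Move V 1} (h : Legal E D mv) :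
    (computes mv).Subsingleton := by
  cases mv with
  | compute m f v =>
    rintro _ ⟨i, rfl⟩ _ ⟨i', rfl⟩
    have : m ≤ 1 := h.1
    exact congrArg v (Fin.ext (by omega))
  | _ => simp [computes]

lemma Run.computedAt_unique [DecidableEq V] {C C' : Conf V 1} {ms : List (Move V 1)}
    (h : Run E r C ms C') {s : ℕ} {x y : V} (hx : ComputedAt ms s x) (hy : ComputedAt ms s y) :
    x = y := by
  obtain ⟨mv, hmv, hx⟩ := hx
  obtain ⟨mv', hmv', hy⟩ := hy
  obtain rfl : mv = mv' := Option.some.inj (hmv.symm.trans hmv')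
  obtain ⟨D, hD⟩ := h.exists_legal_of_mem (List.mem_of_getElem? hmv)
  exact hD.computes_subsingleton hx hy

section OneProcessor

variable [DecidableEq V] [Fintype V] {ms : List (Move V 1)}

lemma IsPebbling.exists_injective_computePosition (hE : IsDag E) (h : IsPebbling E r ms) :
    ∃ F : V → Fin ms.length, Function.Injective F ∧
      ∀ x, F x ∈ computePositions ms ∧ ComputedAt ms (F x) x := by
  choose s hs using h.exists_computedAt hE
  have hlt : ∀ x, s x < ms.length := fun x => (computedAt_iff.mp (hs x)).1
  refine ⟨fun x => ⟨s x, hlt x⟩, fun x y hxy => ?_, fun x => ⟨?_, hs x⟩⟩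
  · obtain ⟨Cf, hrun, -⟩ := h
    have hsxy : s x = s y := congrArg Fin.val hxy
    exact hrun.computedAt_unique (hs x) (hsxy ▸ hs y)
  · obtain ⟨_, hx⟩ := computedAt_iff.mp (hs x)
    simpa [computePositions] using isCompute_of_mem_computes hx

lemma IsPebbling.card_le_cost (hE : IsDag E) (h : IsPebbling E r ms) (g : ℕ) :
    Fintype.card V ≤ cost g ms := by
  obtain ⟨F, hinj, hF⟩ := h.exists_injective_computePosition hE
  calc Fintype.card V ≤ (computePositions ms).card :=
        Finset.card_le_card_of_injOn F (fun x _ => (hF x).1) hinj.injOn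
    _ = computeCount ms := card_computePositions ms
    _ ≤ cost g ms := computeCount_le_cost g ms

/-- A pebbling of cost at most `|V|` makes the injection of `exists_injective_computePosition`
a bijection onto the compute positions, so no node is computed twice. -/
lemma IsPebbling.existsUnique_computedAt {g : ℕ} (hE : IsDag E) (h : IsPebbling E r ms)
    (hcost : cost g ms ≤ Fintype.card V) (x : V) : ∃! s, ComputedAt ms s x := by
  obtain ⟨F, hinj, hF⟩ := h.exists_injective_computePosition hE
  refine ⟨F x, (hF x).2, fun s hs => ?_⟩
  obtain ⟨hlt, hsx⟩ := computedAt_iff.mp hs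
  have hcard : (computePositions ms).card ≤ (Finset.univ : Finset V).card := by
    rw [card_computePositions, Finset.card_univ]
    exact (computeCount_le_cost g ms).trans hcost
  obtain ⟨y, -, hy⟩ := Finset.surj_on_of_inj_on_of_card_le (fun y _ => F y)
    (fun y _ => (hF y).1) (fun _ _ _ _ hxy => hinj hxy) hcard ⟨s, hlt⟩
    (by simpa [computePositions] using isCompute_of_mem_computes hsx)
  obtain ⟨Cf, hrun, -⟩ := h
  have hyx : y = x := hrun.computedAt_unique (hF y).2 (by rw [← hy]; exact hs)
  rw [← hyx, ← hy]

end OneProcessor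

def computeMove (x : V) : Move V 1 := .compute 1 (fun _ => 0) (fun _ => x)

def removeMove (x : V) : Move V 1 := .removeRed 0 x

def redConf (s : Finset V) : Conf V 1 := ⟨fun _ => s, ∅⟩

def slide (p : ℕ → V) (c : ℕ) : List (Move V 1) :=
  (List.range c).flatMap fun i => [computeMove (p (i + 1)), removeMove (p i)]

lemma cost_computeMove_cons (g : ℕ) (x : V) (ms : List (Move V 1)) :
    cost g (computeMove x :: ms) = cost g ms + 1 := by
  simp [cost, computeMove, moveCost, add_comm]

lemma cost_slide (g : ℕ) (p : ℕ → V) (c : ℕ) : cost g (slide p c) = c := by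
  rw [slide, cost_flatMap]
  simp [cost, computeMove, removeMove, moveCost]

variable [DecidableEq V]

lemma Run.append {C C' C'' : Conf V k} {ms ms' : List (Move V k)}
    (h : Run E r C ms C') (h' : Run E r C' ms' C'') : Run E r C (ms ++ ms') C'' := by
  induction h with
  | nil => exact h'
  | cons hlegal hvalid _ ih => exact .cons hlegal hvalid (ih h')

lemma apply_computeMove (x : V) (s : Finset V) :
    apply (computeMove x) (redConf s) = redConf (insert x s) := by
  simp only [apply, computeMove, redConf, Conf.mk.injEq, and_true]
  ext j y
  simp [addRed, Fin.fin_one_eq_zero j, eq_comm]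

lemma apply_removeMove (x : V) (s : Finset V) :
    apply (removeMove x) (redConf s) = redConf (s.erase x) := by
  simp only [apply, removeMove, redConf, Conf.mk.injEq, and_true]
  ext j y
  simp [Fin.fin_one_eq_zero j, Finset.sdiff_singleton_eq_erase]

lemma Run.computeMove_cons {s : Finset V} {x : V} {ms : List (Move V 1)} {C : Conf V 1}
    (hpred : ∀ u, E u x → u ∈ s) (hcard : (insert x s).card ≤ r)
    (h : Run E r (redConf (insert x s)) ms C) : Run E r (redConf s) (computeMove x :: ms) C := by
  refine .cons ⟨le_rfl, Function.injective_of_subsingleton _, fun _ u hu => hpred u hu⟩ ?_ ?_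
  · rw [apply_computeMove]; exact fun _ => hcard
  · rwa [apply_computeMove]

lemma Run.removeMove_cons {s : Finset V} {x : V} {ms : List (Move V 1)} {C : Conf V 1}
    (hcard : s.card ≤ r) (h : Run E r (redConf (s.erase x)) ms C) :
    Run E r (redConf s) (removeMove x :: ms) C := by
  refine .cons trivial ?_ ?_
  · rw [apply_removeMove]; exact fun _ => Finset.card_erase_le.trans hcard
  · rwa [apply_removeMove]

lemma run_slide {p : ℕ → V} {S : Finset V} {c : ℕ} (hr : S.card + 2 ≤ r)
    (hS : ∀ i < c, p i ∉ S) (hne : ∀ i < c, p (i + 1) ≠ p i)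
    (hpred : ∀ i < c, ∀ u, E u (p (i + 1)) → u = p i ∨ u ∈ S) :
    Run E r (redConf (insert (p 0) S)) (slide p c) (redConf (insert (p c) S)) := by
  induction c with
  | zero => exact .nil _
  | succ c ih =>
    rw [slide, List.range_succ, List.flatMap_append, ← slide, List.flatMap_singleton]
    have hcard : (insert (p (c + 1)) (insert (p c) S)).card ≤ r := by
      have := Finset.card_insert_le (p (c + 1)) (insert (p c) S)
      have := Finset.card_insert_le (p c) S
      omega
    refine (ih (fun i hi => hS i (by omega)) (fun i hi => hne i (by omega))
      (fun i hi => hpred i (by omega))).append ?_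
    refine .computeMove_cons (fun u hu => ?_) hcard (.removeMove_cons hcard ?_)
    · rcases hpred c (by omega) u hu with rfl | hu
      · exact Finset.mem_insert_self _ _
      · exact Finset.mem_insert_of_mem hu
    · rw [Finset.erase_insert_of_ne (hne c (by omega)), Finset.erase_insert (hS c (by omega))]
      exact .nil _

end MPP

namespace ZipV

variable {d n₀ g : ℕ}

def equivSum : ZipV d n₀ g ≃ Fin (2 * d) ⊕ Fin n₀ ⊕ Fin (2 * d) × Fin (2 * g) where
  toFun
    | .u j => .inl j
    | .v i => .inr (.inl i)
    | .w j t => .inr (.inr (j, t))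
  invFun
    | .inl j => .u j
    | .inr (.inl i) => .v i
    | .inr (.inr (j, t)) => .w j t
  left_inv x := by cases x <;> rfl
  right_inv x := by rcases x with j | i | ⟨j, t⟩ <;> rfl

instance : Fintype (ZipV d n₀ g) := Fintype.ofEquiv _ equivSum.symm

def rank : ZipV d n₀ g → ℕ
  | .w _ t => t
  | .u _ => 2 * g
  | .v i => 2 * g + 1 + i

end ZipV

lemma card_zipV (d n₀ g : ℕ) : Fintype.card (ZipV d n₀ g) = n₀ + 2 * d * (2 * g + 1) := by
  rw [Fintype.card_congr ZipV.equivSum]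
  simp only [Fintype.card_sum, Fintype.card_prod, Fintype.card_fin]
  ring

lemma isDag_zipE (d n₀ g : ℕ) : IsDag (ZipE d n₀ g) := by
  refine isDag_of_rank_lt ZipV.rank fun x y h => ?_
  cases x <;> cases y <;> simp [ZipE, ZipV.rank] at h ⊢ <;> omega

namespace Zipper

open MPP

variable {d n₀ g : ℕ}

def inputPath (j : Fin (2 * d)) (t : ℕ) : ZipV d n₀ g :=
  if h : t < 2 * g then .w j ⟨t, h⟩ else .u j

def mainPath (hn : 0 < n₀) (i : ℕ) : ZipV d n₀ g := .v ⟨min i (n₀ - 1), by omega⟩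

def inputMoves (j : Fin (2 * d)) : List (Move (ZipV d n₀ g) 1) :=
  computeMove (inputPath j 0) :: slide (inputPath j) (2 * g)

def inputs : Finset (ZipV d n₀ g) := ((List.finRange (2 * d)).map .u).toFinset

def strategy (hn : 0 < n₀) : List (Move (ZipV d n₀ g) 1) :=
  (List.finRange (2 * d)).flatMap inputMoves ++
    computeMove (mainPath hn 0) :: slide (mainPath hn) (n₀ - 1)

lemma mem_inputs {x : ZipV d n₀ g} : x ∈ inputs ↔ ∃ j, x = .u j := by
  simp [inputs, eq_comm]

lemma card_inputs : (inputs : Finset (ZipV d n₀ g)).card ≤ 2 * d :=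
  (List.toFinset_card_le _).trans (by simp)

lemma run_inputMoves {T : Finset (ZipV d n₀ g)} (hT : ∀ j t, .w j t ∉ T) (hcard : T.card ≤ 2 * d)
    (j : Fin (2 * d)) :
    Run (ZipE d n₀ g) (2 * d + 2) (redConf T) (inputMoves j) (redConf (insert (.u j) T)) := by
  have hsource : ∀ u, ¬ ZipE d n₀ g u (inputPath j 0) := by
    intro u hu
    unfold inputPath at hu
    split_ifs at hu <;> cases u <;> simp only [ZipE] at hu <;> omega
  refine .computeMove_cons (fun u hu => (hsource u hu).elim)
    ((Finset.card_insert_le _ _).trans (by omega)) ?_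
  have hslide := run_slide (E := ZipE d n₀ g) (r := 2 * d + 2) (p := inputPath j) (S := T)
    (c := 2 * g) (by omega) (fun i hi => by simp [inputPath, hi, hT]) (fun i hi => ?_)
    (fun i hi u hu => ?_)
  · have hlast : (inputPath j (2 * g) : ZipV d n₀ g) = .u j := dif_neg (lt_irrefl _)
    rwa [hlast] at hslide
  · unfold inputPath
    split_ifs <;> simp [Fin.ext_iff]
  · unfold inputPath at hu ⊢
    split_ifs at hu ⊢ <;> cases u <;> simp_all [ZipE, Fin.ext_iff]
    all_goals omega

lemma run_flatMap_inputMoves (js : List (Fin (2 * d))) {T : Finset (ZipV d n₀ g)}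
    (hT : ∀ j t, .w j t ∉ T) (hcard : T.card + js.length ≤ 2 * d) :
    Run (ZipE d n₀ g) (2 * d + 2) (redConf T) (js.flatMap inputMoves)
      (redConf (T ∪ (js.map .u).toFinset)) := by
  induction js generalizing T with
  | nil => simpa using .nil _
  | cons j js ih =>
    simp only [List.length_cons] at hcard
    rw [List.flatMap_cons]
    refine (run_inputMoves hT (by omega) j).append ?_
    have := Finset.card_insert_le (ZipV.u j) T
    convert ih (T := insert (.u j) T) (by simp [hT]) (by omega) using 2
    simp [Finset.union_insert, Finset.insert_union]

lemma run_strategy (hn : 0 < n₀) :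
    Run (ZipE d n₀ g) (2 * d + 2) (init _ 1) (strategy hn)
      (redConf (insert (mainPath hn (n₀ - 1)) inputs)) := by
  have hinputs : Run (ZipE d n₀ g) (2 * d + 2) (redConf ∅)
      ((List.finRange (2 * d)).flatMap inputMoves) (redConf inputs) := by
    have h := run_flatMap_inputMoves (List.finRange (2 * d))
      (T := (∅ : Finset (ZipV d n₀ g))) (by simp) (by simp)
    rwa [Finset.empty_union] at h
  have hcard := card_inputs (d := d) (n₀ := n₀) (g := g)
  refine hinputs.append (.computeMove_cons (fun u hu => ?_) ?_ (run_slide ?_ ?_ ?_ ?_))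
  · cases u <;> simp_all [ZipE, mainPath, mem_inputs]
  · exact (Finset.card_insert_le _ _).trans (by omega)
  · omega
  · intro i _
    simp [mainPath, mem_inputs]
  · intro i hi
    simp only [mainPath, ne_eq, ZipV.v.injEq, Fin.ext_iff]
    omega
  · intro i hi u hu
    cases u <;> simp_all [ZipE, mainPath, mem_inputs, Fin.ext_iff]
    all_goals omega

lemma terminal_strategy (hn : 0 < n₀) :
    Terminal (ZipE d n₀ g) (redConf (insert (mainPath hn (n₀ - 1)) inputs)) := by
  intro x hx
  refine Or.inr ⟨0, ?_⟩
  cases x with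
  | u j => simp [redConf, mem_inputs]
  | v i =>
    have hi : i.val = n₀ - 1 := by
      by_contra hi
      exact hx (.v ⟨i + 1, by omega⟩) (by simp [ZipE])
    simp [redConf, mainPath, Fin.ext_iff, hi]
  | w j t =>
    by_cases ht : t.val + 1 < 2 * g
    · exact (hx (.w j ⟨t + 1, ht⟩) (by simp [ZipE])).elim
    · exact (hx (.u j) (by simp [ZipE]; omega)).elim

lemma cost_strategy (hn : 0 < n₀) (g' : ℕ) :
    cost g' (strategy (d := d) (g := g) hn) = n₀ + 2 * d * (2 * g + 1) := by
  simp only [strategy, inputMoves, cost_append, cost_flatMap, cost_computeMove_cons, cost_slide]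
  simp only [List.map_const', List.length_finRange, List.sum_replicate, smul_eq_mul]
  omega

lemma ioCount_strategy (hn : 0 < n₀) : ioCount (strategy (d := d) (g := g) hn) = 0 := by
  rw [ioCount_eq_zero_iff]
  simp only [strategy, inputMoves, slide, computeMove, removeMove, List.mem_append,
    List.mem_cons, List.mem_flatMap, List.mem_range, List.not_mem_nil, or_false]
  rintro mv (⟨_, _, rfl | ⟨_, _, rfl | rfl⟩⟩ | rfl | ⟨_, _, rfl | rfl⟩) <;> rfl

end Zipper

theorem stmt14_general (d n₀ g : ℕ) (hn : 0 < n₀) :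
    (∃ ms : List (MPP.Move (ZipV d n₀ g) 1),
        MPP.IsPebbling (ZipE d n₀ g) (2 * d + 2) ms ∧ MPP.ioCount ms = 0 ∧
        ∀ x : ZipV d n₀ g, ∃! s : ℕ, MPP.ComputedAt ms s x) ∧
    MPP.optCost (ZipE d n₀ g) 1 (2 * d + 2) g = n₀ + 2 * d * (2 * g + 1) := by
  have hpeb : MPP.IsPebbling (ZipE d n₀ g) (2 * d + 2) (Zipper.strategy hn) :=
    ⟨_, Zipper.run_strategy hn, Zipper.terminal_strategy hn⟩
  have hcost := Zipper.cost_strategy (d := d) (g := g) hn g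
  refine ⟨⟨_, hpeb, Zipper.ioCount_strategy hn,
    hpeb.existsUnique_computedAt (isDag_zipE d n₀ g) (by rw [hcost, card_zipV])⟩, ?_⟩
  refine le_antisymm (Nat.sInf_le ⟨_, hpeb, hcost⟩) (le_csInf ⟨_, _, hpeb, hcost⟩ ?_)
  rintro c ⟨ms, hms, rfl⟩
  exact card_zipV d n₀ g ▸ hms.card_le_cost (isDag_zipE d n₀ g) g

/-- For all `d, n₀, g ∈ ℤ⁺`, the zipper gadget `Z(d,n₀,g)` with a
single processor (`k = 1`) and memory bound `r = 2d+2` admits a pebbling strategy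
that uses no I/O moves and computes every node exactly once; consequently the
optimal MPP cost with `k = 1` and `r = 2d+2` equals `n = n₀ + 2d(2g+1)`, the
number of nodes of `Z(d,n₀,g)`. -/
theorem stmt14 (d n₀ g : ℕ) (hd : 0 < d) (hn : 0 < n₀) (hg : 0 < g) :
    (∃ ms : List (MPP.Move (ZipV d n₀ g) 1),
        MPP.IsPebbling (ZipE d n₀ g) (2 * d + 2) ms ∧ MPP.ioCount ms = 0 ∧
        ∀ x : ZipV d n₀ g, ∃! s : ℕ, MPP.ComputedAt ms s x) ∧
    MPP.optCost (ZipE d n₀ g) 1 (2 * d + 2) g = n₀ + 2 * d * (2 * g + 1) :=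
  stmt14_general d n₀ g hn
end

section
/- For all d, n₀, g ∈ ℤ⁺, the zipper gadget Z(d,n₀,g) with k = 2 processors and memory bound r = d+2 per processor admits an MPP pebbling strategy of total cost at most (1 + 2g)·n₀ + 2d·(2g+1): each processor keeps one input group in fast memory, the main-chain nodes are computed alternatingly on the two processors, and only the current main-chain node is communicated. -/
open scoped Classical

set_option linter.unusedSectionVars false
namespace Aux
open MPP

variable {V : Type*} [DecidableEq V] {k : ℕ} {E : V → V → Prop} {r : ℕ}

theorem run_append {C₁ C₂ C₃ : Conf V k} {l₁ l₂ : List (Move V k)}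
    (h₁ : Run E r C₁ l₁ C₂) (h₂ : Run E r C₂ l₂ C₃) : Run E r C₁ (l₁ ++ l₂) C₃ := by
  induction h₁ with
  | nil => simpa
  | cons hl hv _ ih => exact Run.cons hl hv (ih h₂)

theorem run_one {C : Conf V k} {mv : Move V k} (hl : Legal E C mv)
    (hv : Valid r (apply mv C)) : Run E r C [mv] (apply mv C) :=
  .cons hl hv (.nil _)

def cpt (p : Fin k) (x : V) : Move V k := .compute 1 (fun _ => p) (fun _ => x)
def sv (p : Fin k) (x : V) : Move V k := .save 1 (fun _ => p) (fun _ => x)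
def ld (p : Fin k) (x : V) : Move V k := .load 1 (fun _ => p) (fun _ => x)

theorem union_singleton' (s : Finset V) (a : V) : s ∪ {a} = insert a s := by
  ext y; simp [or_comm]

theorem addRed_single (C : Conf V k) (p : Fin k) (x : V) :
    addRed C (fun _ : Fin 1 => p) (fun _ => x) = Function.update C.red p (insert x (C.red p)) := by
  funext j
  by_cases h : j = p
  · subst h
    simp [addRed, union_singleton', Finset.image_const]
  · simp [addRed, Function.update, h, Finset.filter_false_of_mem, Ne.symm h]

theorem apply_cpt (C : Conf V k) (p : Fin k) (x : V) :
    apply (cpt p x) C = ⟨Function.update C.red p (insert x (C.red p)), C.blue⟩ := by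
  simp [cpt, apply, addRed_single]

theorem apply_ld (C : Conf V k) (p : Fin k) (x : V) :
    apply (ld p x) C = ⟨Function.update C.red p (insert x (C.red p)), C.blue⟩ := by
  simp [ld, apply, addRed_single]

theorem apply_sv (C : Conf V k) (p : Fin k) (x : V) :
    apply (sv p x) C = ⟨C.red, insert x C.blue⟩ := by
  simp [sv, apply, union_singleton', Finset.image_const]

theorem apply_rm (C : Conf V k) (p : Fin k) (x : V) :
    apply (.removeRed p x) C = ⟨Function.update C.red p (C.red p \ {x}), C.blue⟩ := rfl

theorem legal_cpt {C : Conf V k} {p : Fin k} {x : V} (hk : 1 ≤ k)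
    (h : ∀ u, E u x → u ∈ C.red p) : Legal E C (cpt p x) :=
  ⟨hk, fun a b _ => Subsingleton.elim a b, fun _ u hu => h u hu⟩

theorem legal_sv {C : Conf V k} {p : Fin k} {x : V} (hk : 1 ≤ k)
    (h : x ∈ C.red p) : Legal E C (sv p x) :=
  ⟨hk, fun a b _ => Subsingleton.elim a b, fun _ => h⟩

theorem legal_ld {C : Conf V k} {p : Fin k} {x : V} (hk : 1 ≤ k)
    (h : x ∈ C.blue) : Legal E C (ld p x) :=
  ⟨hk, fun a b _ => Subsingleton.elim a b, fun _ => h⟩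

theorem legal_rmRed (C : Conf V k) (p : Fin k) (x : V) :
    Legal E C (.removeRed p x) := trivial

theorem cost_append (g : ℕ) (l₁ l₂ : List (Move V k)) :
    cost g (l₁ ++ l₂) = cost g l₁ + cost g l₂ := by
  simp [cost]

end Aux
namespace Aux
open MPP

variable {d n₀ g : ℕ}

def Uof (d n₀ g : ℕ) (s : Finset (Fin (2*d))) : Finset (ZipV d n₀ g) := s.image ZipV.u

lemma u_injective : Function.Injective (ZipV.u : Fin (2*d) → ZipV d n₀ g) := by
  intro a b h; injection h

lemma Uof_card (s : Finset (Fin (2*d))) : (Uof d n₀ g s).card = s.card :=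
  Finset.card_image_of_injective _ u_injective

lemma u_mem_Uof {s : Finset (Fin (2*d))} {j : Fin (2*d)} (h : j ∈ s) :
    ZipV.u j ∈ Uof d n₀ g s := Finset.mem_image_of_mem _ h

lemma w_not_mem_Uof (s : Finset (Fin (2*d))) (j t) : ZipV.w j t ∉ Uof d n₀ g s := by
  simp [Uof]

lemma v_not_mem_Uof (s : Finset (Fin (2*d))) (i) : ZipV.v i ∉ Uof d n₀ g s := by
  simp [Uof]

lemma valid_update {V : Type*} [DecidableEq V] {k r : ℕ} {C : Conf V k}
    (h : Valid r C) (p : Fin k) {S : Finset V} (hS : S.card ≤ r) (B : Finset V) :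
    Valid r ⟨Function.update C.red p S, B⟩ := by
  intro q; by_cases hq : q = p
  · subst hq; simpa [Function.update_self] using hS
  · simpa [Function.update_of_ne hq] using h q

lemma apply_rm_red {V : Type*} [DecidableEq V] {k : ℕ} (C : Conf V k) (p : Fin k) (x : V) :
    (apply (.removeRed p x) C).red = Function.update C.red p (C.red p \ {x}) := rfl

lemma apply_rm_blue {V : Type*} [DecidableEq V] {k : ℕ} (C : Conf V k) (p : Fin k) (x : V) :
    (apply (.removeRed p x) C).blue = C.blue := rfl

theorem wchain (p : Fin 2) (j : Fin (2*d)) :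
    ∀ (t : ℕ) (ht : t < 2*g), ∀ C : Conf (ZipV d n₀ g) 2,
    Valid (d+2) C → (C.red p).card ≤ d → (∀ j' t', ZipV.w j' t' ∉ C.red p) →
    ∃ ms C', Run (ZipE d n₀ g) (d+2) C ms C' ∧
      C'.red = Function.update C.red p (insert (ZipV.w j ⟨t, ht⟩) (C.red p)) ∧
      C'.blue = C.blue ∧ cost g ms = t + 1 := by
  intro t
  induction t with
  | zero =>
    intro ht C hC hcard hfree
    refine ⟨[cpt p (ZipV.w j ⟨0, ht⟩)], _,
      run_one (legal_cpt (by norm_num) ?_) ?_, ?_, ?_, ?_⟩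
    · intro u hu
      cases u with
      | u j' => exact hu.elim
      | v i => exact hu.elim
      | w j' t' =>
        exfalso
        have h2 := hu.2
        simp only [Fin.val_mk] at h2
        omega
    · rw [apply_cpt]
      refine valid_update hC p ?_ _
      calc (insert (ZipV.w j ⟨0, ht⟩) (C.red p)).card ≤ (C.red p).card + 1 :=
            Finset.card_insert_le _ _
        _ ≤ d + 2 := by omega
    · rw [apply_cpt]
    · rw [apply_cpt]
    · simp [cost, moveCost, cpt]
  | succ t ih =>
    intro ht C hC hcard hfree
    have ht' : t < 2*g := by omega
    obtain ⟨ms₁, C₁, hrun₁, hred₁, hblue₁, hcost₁⟩ := ih ht' C hC hcard hfree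
    have hredp : C₁.red p = insert (ZipV.w j ⟨t, ht'⟩) (C.red p) := by
      rw [hred₁, Function.update_self]
    -- move 1: compute w j (t+1)
    set x₁ : ZipV d n₀ g := ZipV.w j ⟨t+1, ht⟩ with hx₁
    set x₀ : ZipV d n₀ g := ZipV.w j ⟨t, ht'⟩ with hx₀
    have hx01 : x₀ ≠ x₁ := by
      simp only [hx₀, hx₁, ne_eq, ZipV.w.injEq]
      intro h
      have := h.2
      simp only [Fin.mk.injEq] at this
      omega
    have hC₁ : Valid (d+2) C₁ := by
      intro q
      rw [hred₁]
      by_cases hq : q = p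
      · rw [hq, Function.update_self]
        calc (insert x₀ (C.red p)).card ≤ (C.red p).card + 1 := Finset.card_insert_le _ _
          _ ≤ d + 2 := by omega
      · rw [Function.update_of_ne hq]; exact hC q
    have hlegal₂ : Legal (ZipE d n₀ g) C₁ (cpt p x₁) := by
      refine legal_cpt (by norm_num) ?_
      intro u hu
      cases u with
      | u j' => exact hu.elim
      | v i => exact hu.elim
      | w j' t' =>
        obtain ⟨hj, htt⟩ := hu
        simp only [Fin.val_mk] at htt
        have : t' = (⟨t, ht'⟩ : Fin (2*g)) := by
          apply Fin.ext; simp only [Fin.val_mk]; omega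
        subst hj this
        rw [hredp]
        exact Finset.mem_insert_self _ _
    set C₂ := apply (cpt p x₁) C₁ with hC₂def
    have hC₂red : C₂.red = Function.update C₁.red p (insert x₁ (C₁.red p)) := by
      rw [hC₂def, apply_cpt]
    have hC₂blue : C₂.blue = C₁.blue := by rw [hC₂def, apply_cpt]
    have hC₂valid : Valid (d+2) C₂ := by
      rw [hC₂def, apply_cpt]
      refine valid_update hC₁ p ?_ _
      rw [hredp]
      calc (insert x₁ (insert x₀ (C.red p))).card
          ≤ (insert x₀ (C.red p)).card + 1 := Finset.card_insert_le _ _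
        _ ≤ (C.red p).card + 1 + 1 := by
            have := Finset.card_insert_le x₀ (C.red p); omega
        _ ≤ d + 2 := by omega
    -- move 2: remove w j t
    set C₃ := apply (.removeRed p x₀) C₂ with hC₃def
    have hC₂redp : C₂.red p = insert x₁ (insert x₀ (C.red p)) := by
      rw [hC₂red, Function.update_self, hredp]
    have hC₃red : C₃.red = Function.update C.red p (insert x₁ (C.red p)) := by
      rw [hC₃def, apply_rm_red]
      funext q
      by_cases hq : q = p
      · rw [hq, Function.update_self, Function.update_self, hC₂redp,
          Finset.sdiff_singleton_eq_erase, Finset.erase_insert_of_ne (Ne.symm hx01),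
          Finset.erase_insert (hfree j ⟨t, ht'⟩)]
      · rw [Function.update_of_ne hq, Function.update_of_ne hq, hC₂red,
          Function.update_of_ne hq, hred₁, Function.update_of_ne hq]
    have hC₃valid : Valid (d+2) C₃ := by
      intro q
      show ((apply (.removeRed p x₀) C₂).red q).card ≤ d + 2
      rw [apply_rm_red]
      by_cases hq : q = p
      · rw [hq, Function.update_self]
        calc (C₂.red p \ {x₀}).card ≤ (C₂.red p).card := Finset.card_le_card (Finset.sdiff_subset)
          _ ≤ d + 2 := hC₂valid p
      · rw [Function.update_of_ne hq]; exact hC₂valid q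
    refine ⟨ms₁ ++ [cpt p x₁, Move.removeRed p x₀], C₃,
      run_append hrun₁ (.cons hlegal₂ hC₂valid (.cons (legal_rmRed _ _ _) hC₃valid (.nil _))), hC₃red, ?_, ?_⟩
    · show (apply (.removeRed p x₀) C₂).blue = C.blue
      rw [apply_rm_blue, hC₂blue, hblue₁]
    · rw [cost_append, hcost₁]
      simp [cost, moveCost, cpt]

end Aux
namespace Aux
open MPP

variable {d n₀ g : ℕ}

theorem buildU (hg : 0 < g) (p : Fin 2) (j : Fin (2*d)) (C : Conf (ZipV d n₀ g) 2)
    (hC : Valid (d+2) C) (hcard : (C.red p).card ≤ d)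
    (hfree : ∀ j' t', ZipV.w j' t' ∉ C.red p) :
    ∃ ms C', Run (ZipE d n₀ g) (d+2) C ms C' ∧
      C'.red = Function.update C.red p (insert (ZipV.u j) (C.red p)) ∧
      C'.blue = C.blue ∧ cost g ms = 2*g + 1 := by
  have ht : 2*g - 1 < 2*g := by omega
  obtain ⟨ms₁, C₁, hrun₁, hred₁, hblue₁, hcost₁⟩ := wchain p j (2*g-1) ht C hC hcard hfree
  set x₀ : ZipV d n₀ g := ZipV.w j ⟨2*g-1, ht⟩ with hx₀
  set x₁ : ZipV d n₀ g := ZipV.u j with hx₁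
  have hredp : C₁.red p = insert x₀ (C.red p) := by
    rw [hred₁, Function.update_self]
  have hx01 : x₀ ≠ x₁ := by simp [hx₀, hx₁]
  have hC₁ : Valid (d+2) C₁ := by
    intro q
    rw [hred₁]
    by_cases hq : q = p
    · rw [hq, Function.update_self]
      calc (insert x₀ (C.red p)).card ≤ (C.red p).card + 1 := Finset.card_insert_le _ _
        _ ≤ d + 2 := by omega
    · rw [Function.update_of_ne hq]; exact hC q
  have hlegal₂ : Legal (ZipE d n₀ g) C₁ (cpt p x₁) := by
    refine legal_cpt (by norm_num) ?_
    intro u hu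
    cases u with
    | u j' => exact hu.elim
    | v i => exact hu.elim
    | w j' t' =>
      obtain ⟨hj, htt⟩ := hu
      have : t' = (⟨2*g-1, ht⟩ : Fin (2*g)) := by
        apply Fin.ext; simp only [Fin.val_mk]; omega
      subst hj this
      rw [hredp]
      exact Finset.mem_insert_self _ _
  set C₂ := apply (cpt p x₁) C₁ with hC₂def
  have hC₂red : C₂.red = Function.update C₁.red p (insert x₁ (C₁.red p)) := by
    rw [hC₂def, apply_cpt]
  have hC₂blue : C₂.blue = C₁.blue := by rw [hC₂def, apply_cpt]
  have hC₂redp : C₂.red p = insert x₁ (insert x₀ (C.red p)) := by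
    rw [hC₂red, Function.update_self, hredp]
  have hC₂valid : Valid (d+2) C₂ := by
    rw [hC₂def, apply_cpt]
    refine valid_update hC₁ p ?_ _
    rw [hredp]
    calc (insert x₁ (insert x₀ (C.red p))).card
        ≤ (insert x₀ (C.red p)).card + 1 := Finset.card_insert_le _ _
      _ ≤ (C.red p).card + 1 + 1 := by
          have := Finset.card_insert_le x₀ (C.red p); omega
      _ ≤ d + 2 := by omega
  set C₃ := apply (.removeRed p x₀) C₂ with hC₃def
  have hC₃red : C₃.red = Function.update C.red p (insert x₁ (C.red p)) := by
    rw [hC₃def, apply_rm_red]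
    funext q
    by_cases hq : q = p
    · rw [hq, Function.update_self, Function.update_self, hC₂redp,
        Finset.sdiff_singleton_eq_erase, Finset.erase_insert_of_ne (Ne.symm hx01),
        Finset.erase_insert (hfree j ⟨2*g-1, ht⟩)]
    · rw [Function.update_of_ne hq, Function.update_of_ne hq, hC₂red,
        Function.update_of_ne hq, hred₁, Function.update_of_ne hq]
  have hC₃valid : Valid (d+2) C₃ := by
    intro q
    show ((apply (.removeRed p x₀) C₂).red q).card ≤ d + 2
    rw [apply_rm_red]
    by_cases hq : q = p
    · rw [hq, Function.update_self]
      calc (C₂.red p \ {x₀}).card ≤ (C₂.red p).card := Finset.card_le_card (Finset.sdiff_subset)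
        _ ≤ d + 2 := hC₂valid p
    · rw [Function.update_of_ne hq]; exact hC₂valid q
  refine ⟨ms₁ ++ [cpt p x₁, Move.removeRed p x₀], C₃,
    run_append hrun₁ (.cons hlegal₂ hC₂valid (.cons (legal_rmRed _ _ _) hC₃valid (.nil _))),
    hC₃red, ?_, ?_⟩
  · show (apply (.removeRed p x₀) C₂).blue = C.blue
    rw [apply_rm_blue, hC₂blue, hblue₁]
  · rw [cost_append, hcost₁]
    simp [cost, moveCost, cpt]
    omega

theorem buildSet (hg : 0 < g) (p : Fin 2) :
    ∀ s : Finset (Fin (2*d)), ∀ C : Conf (ZipV d n₀ g) 2,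
    Valid (d+2) C → (C.red p).card + s.card ≤ d →
    (∀ j' t', ZipV.w j' t' ∉ C.red p) →
    ∃ ms C', Run (ZipE d n₀ g) (d+2) C ms C' ∧
      C'.red = Function.update C.red p (C.red p ∪ Uof d n₀ g s) ∧
      C'.blue = C.blue ∧ cost g ms = s.card * (2*g+1) := by
  intro s
  induction s using Finset.induction_on with
  | empty =>
    intro C hC _ _
    refine ⟨[], C, .nil _, ?_, rfl, by simp [cost]⟩
    simp [Uof, Function.update_eq_self]
  | @insert a s ha ih =>
    intro C hC hcard hfree
    have hcard' : (C.red p).card ≤ d := by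
      have := Finset.card_insert_of_notMem ha
      omega
    obtain ⟨ms₁, C₁, hrun₁, hred₁, hblue₁, hcost₁⟩ := buildU hg p a C hC hcard' hfree
    have hredp : C₁.red p = insert (ZipV.u a) (C.red p) := by
      rw [hred₁, Function.update_self]
    have hC₁ : Valid (d+2) C₁ := by
      intro q
      rw [hred₁]
      by_cases hq : q = p
      · rw [hq, Function.update_self]
        calc (insert (ZipV.u a) (C.red p)).card ≤ (C.red p).card + 1 :=
              Finset.card_insert_le _ _
          _ ≤ d + 2 := by omega
      · rw [Function.update_of_ne hq]; exact hC q
    have hcard₁ : (C₁.red p).card + s.card ≤ d := by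
      rw [hredp]
      have h1 := Finset.card_insert_le (ZipV.u a) (C.red p)
      have h2 := Finset.card_insert_of_notMem ha
      omega
    have hfree₁ : ∀ j' t', ZipV.w j' t' ∉ C₁.red p := by
      intro j' t'
      rw [hredp]
      simp only [Finset.mem_insert]
      rintro (h | h)
      · exact absurd h (by simp)
      · exact hfree j' t' h
    obtain ⟨ms₂, C₂, hrun₂, hred₂, hblue₂, hcost₂⟩ := ih C₁ hC₁ hcard₁ hfree₁
    refine ⟨ms₁ ++ ms₂, C₂, run_append hrun₁ hrun₂, ?_, by rw [hblue₂, hblue₁], ?_⟩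
    · rw [hred₂, hred₁]
      have hU : Uof d n₀ g (insert a s) = insert (ZipV.u a) (Uof d n₀ g s) :=
        Finset.image_insert _ _ _
      funext q
      by_cases hq : q = p
      · simp only [hq, Function.update_self, hU, Finset.insert_union, Finset.union_insert, Function.update_idem]
      · rw [Function.update_of_ne hq, Function.update_of_ne hq, Function.update_of_ne hq]
    · rw [cost_append, hcost₁, hcost₂, Finset.card_insert_of_notMem ha]
      ring

end Aux
namespace Aux
open MPP

variable {d n₀ g : ℕ}

def GA (d : ℕ) : Finset (Fin (2*d)) := Finset.univ.filter (fun j => (j:ℕ) < d)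
def GB (d : ℕ) : Finset (Fin (2*d)) := Finset.univ.filter (fun j => d ≤ (j:ℕ))

lemma mem_GA {j : Fin (2*d)} : j ∈ GA d ↔ (j:ℕ) < d := by simp [GA]
lemma mem_GB {j : Fin (2*d)} : j ∈ GB d ↔ d ≤ (j:ℕ) := by simp [GB]

lemma GA_card : (GA d).card = d := by
  have h : GA d = (Finset.univ : Finset (Fin d)).image
      (fun i : Fin d => (⟨(i:ℕ), by omega⟩ : Fin (2*d))) := by
    ext j
    simp only [mem_GA, Finset.mem_image, Finset.mem_univ, true_and]
    constructor
    · intro hj; exact ⟨⟨(j:ℕ), hj⟩, Fin.ext rfl⟩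
    · rintro ⟨i, rfl⟩; exact i.2
  rw [h, Finset.card_image_of_injective _ (fun a b hab => Fin.ext (by
    simpa [Fin.ext_iff] using hab)), Finset.card_univ, Fintype.card_fin]

lemma GB_card : (GB d).card = d := by
  have h : GB d = (Finset.univ : Finset (Fin d)).image
      (fun i : Fin d => (⟨d + (i:ℕ), by omega⟩ : Fin (2*d))) := by
    ext j
    simp only [mem_GB, Finset.mem_image, Finset.mem_univ, true_and]
    constructor
    · intro hj; exact ⟨⟨(j:ℕ) - d, by omega⟩, Fin.ext (by simp; omega)⟩
    · rintro ⟨i, rfl⟩; simp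
  rw [h, Finset.card_image_of_injective _ (fun a b hab => Fin.ext (by
    simpa [Fin.ext_iff] using hab)), Finset.card_univ, Fintype.card_fin]

def side (i : ℕ) : Fin 2 := ⟨i % 2, by omega⟩

def grp (d n₀ g : ℕ) (i : ℕ) : Finset (ZipV d n₀ g) :=
  if i % 2 = 0 then Uof d n₀ g (GA d) else Uof d n₀ g (GB d)

lemma side_succ_ne (i : ℕ) : side (i+1) ≠ side i := by
  simp only [side, ne_eq, Fin.mk.injEq]; omega

lemma side_two (i : ℕ) : side (i+2) = side i := by
  simp only [side, Fin.mk.injEq]; omega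

lemma grp_two (i : ℕ) : grp d n₀ g (i+2) = grp d n₀ g i := by
  have h : (i+2) % 2 = i % 2 := by omega
  simp [grp, h]

lemma side_cases (i : ℕ) (q : Fin 2) : q = side i ∨ q = side (i+1) := by
  rcases q with ⟨qv, hq⟩
  simp only [side, Fin.mk.injEq]
  omega

lemma grp_card (i : ℕ) : (grp d n₀ g i).card = d := by
  unfold grp
  split
  · rw [Uof_card, GA_card]
  · rw [Uof_card, GB_card]

lemma v_not_mem_grp (i : ℕ) (z : Fin n₀) : ZipV.v z ∉ grp d n₀ g i := by
  unfold grp; split <;> exact v_not_mem_Uof _ _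

lemma u_mem_grp {i : ℕ} {j : Fin (2*d)}
    (h : ((j:ℕ) < d ∧ i % 2 = 0) ∨ (d ≤ (j:ℕ) ∧ i % 2 = 1)) :
    ZipV.u j ∈ grp d n₀ g i := by
  rcases h with ⟨h1, h2⟩ | ⟨h1, h2⟩
  · rw [grp, if_pos h2]; exact u_mem_Uof (mem_GA.2 h1)
  · rw [grp, if_neg (by omega)]; exact u_mem_Uof (mem_GB.2 h1)

theorem chain (hn : 0 < n₀) :
    ∀ (m i : ℕ), i + m < n₀ → ∀ (C : Conf (ZipV d n₀ g) 2) (z0 : Fin n₀),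
    (z0 : ℕ) = i →
    C.red (side i) = insert (ZipV.v z0) (grp d n₀ g i) →
    C.red (side (i+1)) = grp d n₀ g (i+1) →
    ∃ ms C', ∃ zf : Fin n₀, Run (ZipE d n₀ g) (d+2) C ms C' ∧
      (zf : ℕ) = i + m ∧
      C'.red (side (i+m)) = insert (ZipV.v zf) (grp d n₀ g (i+m)) ∧
      C'.red (side (i+m+1)) = grp d n₀ g (i+m+1) ∧
      cost g ms = m * (2*g+1) := by
  intro m
  induction m with
  | zero =>
    intro i him C z0 hz0 h1 h2
    exact ⟨[], C, z0, .nil _, by omega, h1, h2, by simp [cost]⟩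
  | succ m ih =>
    intro i him C z0 hz0 h1 h2
    have hi1 : i + 1 < n₀ := by omega
    set q0 := side i with hq0
    set q1 := side (i+1) with hq1
    have hne : q1 ≠ q0 := side_succ_ne i
    set x0 : ZipV d n₀ g := ZipV.v z0 with hx0
    set z1 : Fin n₀ := ⟨i+1, hi1⟩ with hz1
    set x1 : ZipV d n₀ g := ZipV.v z1 with hx1
    have hx01 : x1 ≠ x0 := by
      simp only [hx0, hx1, ne_eq, ZipV.v.injEq]
      intro h
      have hv : (i+1 : ℕ) = (z0:ℕ) := congrArg Fin.val h
      omega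
    -- validity of C itself not needed; we track each config explicitly
    have hcard0 : (C.red q0).card ≤ d + 1 := by
      rw [h1]
      have := Finset.card_insert_le x0 (grp d n₀ g i)
      rw [grp_card] at *
      omega
    have hcard1 : (C.red q1).card = d := by rw [h2, grp_card]
    have hvalidC : Valid (d+2) C := by
      intro q
      rcases side_cases i q with hq | hq
      · rw [hq, ← hq0]; omega
      · rw [hq, ← hq1]; omega
    -- move 1 : save x0 from q0
    set C₁ := apply (sv q0 x0) C with hC₁def
    have hC₁red : C₁.red = C.red := by rw [hC₁def, apply_sv]
    have hC₁blue : C₁.blue = insert x0 C.blue := by rw [hC₁def, apply_sv]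
    have hC₁valid : Valid (d+2) C₁ := by intro q; rw [hC₁red]; exact hvalidC q
    have hleg₁ : Legal (ZipE d n₀ g) C (sv q0 x0) :=
      legal_sv (by norm_num) (by rw [h1]; exact Finset.mem_insert_self _ _)
    -- move 2 : load x0 onto q1
    set C₂ := apply (ld q1 x0) C₁ with hC₂def
    have hC₂red : C₂.red = Function.update C₁.red q1 (insert x0 (C₁.red q1)) := by
      rw [hC₂def, apply_ld]
    have hC₂blue : C₂.blue = C₁.blue := by rw [hC₂def, apply_ld]
    have hC₂redq1 : C₂.red q1 = insert x0 (grp d n₀ g (i+1)) := by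
      rw [hC₂red, Function.update_self, hC₁red, h2]
    have hC₂redq0 : C₂.red q0 = C.red q0 := by
      rw [hC₂red, Function.update_of_ne (Ne.symm hne), hC₁red]
    have hC₂valid : Valid (d+2) C₂ := by
      intro q
      rcases side_cases i q with hq | hq
      · rw [hq, ← hq0, hC₂redq0]; exact hvalidC q0
      · rw [hq, ← hq1, hC₂redq1]
        have := Finset.card_insert_le x0 (grp d n₀ g (i+1))
        rw [grp_card] at this
        omega
    have hleg₂ : Legal (ZipE d n₀ g) C₁ (ld q1 x0) :=
      legal_ld (by norm_num) (by rw [hC₁blue]; exact Finset.mem_insert_self _ _)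
    -- move 3 : compute x1 on q1
    set C₃ := apply (cpt q1 x1) C₂ with hC₃def
    have hC₃red : C₃.red = Function.update C₂.red q1 (insert x1 (C₂.red q1)) := by
      rw [hC₃def, apply_cpt]
    have hC₃blue : C₃.blue = C₂.blue := by rw [hC₃def, apply_cpt]
    have hC₃redq1 : C₃.red q1 = insert x1 (insert x0 (grp d n₀ g (i+1))) := by
      rw [hC₃red, Function.update_self, hC₂redq1]
    have hC₃redq0 : C₃.red q0 = C.red q0 := by
      rw [hC₃red, Function.update_of_ne (Ne.symm hne), hC₂redq0]
    have hC₃valid : Valid (d+2) C₃ := by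
      intro q
      rcases side_cases i q with hq | hq
      · rw [hq, ← hq0, hC₃redq0]; exact hvalidC q0
      · rw [hq, ← hq1, hC₃redq1]
        have ha := Finset.card_insert_le x0 (grp d n₀ g (i+1))
        have hb := Finset.card_insert_le x1 (insert x0 (grp d n₀ g (i+1)))
        rw [grp_card] at ha
        omega
    have hleg₃ : Legal (ZipE d n₀ g) C₂ (cpt q1 x1) := by
      refine legal_cpt (by norm_num) ?_
      intro u hu
      cases u with
      | w j' t' => exact hu.elim
      | u j' =>
        rw [hC₂redq1]
        refine Finset.mem_insert_of_mem (u_mem_grp ?_)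
        have hz1v : (z1 : ℕ) = i + 1 := rfl
        rcases hu with ⟨ha, hb⟩ | ⟨ha, hb⟩
        · left; exact ⟨ha, by rw [hz1v] at hb; exact hb⟩
        · right; exact ⟨ha, by rw [hz1v] at hb; exact hb⟩
      | v i' =>
        have hval : (z1 : ℕ) = (i' : ℕ) + 1 := hu
        have : i' = z0 := by apply Fin.ext; have : (z1:ℕ) = i + 1 := rfl; omega
        subst this
        rw [hC₂redq1]
        exact Finset.mem_insert_self _ _
    -- move 4 : remove x0 from q0
    set C₄ := apply (.removeRed q0 x0) C₃ with hC₄def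
    have hC₄redq0 : C₄.red q0 = grp d n₀ g i := by
      rw [hC₄def, apply_rm_red, Function.update_self, hC₃redq0, h1,
        Finset.sdiff_singleton_eq_erase, Finset.erase_insert (v_not_mem_grp i z0)]
    have hC₄redq1 : C₄.red q1 = C₃.red q1 := by
      rw [hC₄def, apply_rm_red, Function.update_of_ne hne]
    have hC₄blue : C₄.blue = C₃.blue := by rw [hC₄def, apply_rm_blue]
    have hC₄valid : Valid (d+2) C₄ := by
      intro q
      rcases side_cases i q with hq | hq
      · rw [hq, ← hq0, hC₄redq0, grp_card]; omega
      · rw [hq, ← hq1, hC₄redq1]; exact hC₃valid q1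
    -- move 5 : remove x0 from q1
    set C₅ := apply (.removeRed q1 x0) C₄ with hC₅def
    have hC₅redq1 : C₅.red q1 = insert x1 (grp d n₀ g (i+1)) := by
      rw [hC₅def, apply_rm_red, Function.update_self, hC₄redq1, hC₃redq1,
        Finset.sdiff_singleton_eq_erase, Finset.erase_insert_of_ne hx01,
        Finset.erase_insert (v_not_mem_grp (i+1) z0)]
    have hC₅redq0 : C₅.red q0 = grp d n₀ g i := by
      rw [hC₅def, apply_rm_red, Function.update_of_ne (Ne.symm hne), hC₄redq0]
    have hC₅blue : C₅.blue = insert x0 C.blue := by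
      rw [hC₅def, apply_rm_blue, hC₄blue, hC₃blue, hC₂blue, hC₁blue]
    have hC₅valid : Valid (d+2) C₅ := by
      intro q
      rcases side_cases i q with hq | hq
      · rw [hq, ← hq0, hC₅redq0, grp_card]; omega
      · rw [hq, ← hq1, hC₅redq1]
        have := Finset.card_insert_le x1 (grp d n₀ g (i+1))
        rw [grp_card] at this
        omega
    -- apply IH at i+1
    have him' : (i+1) + m < n₀ := by omega
    have hz1v : (z1 : ℕ) = i + 1 := rfl
    have hs2 : C₅.red (side ((i+1)+1)) = grp d n₀ g ((i+1)+1) := by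
      have e1 : (i+1)+1 = i+2 := by omega
      rw [e1, side_two, grp_two, ← hq0, hC₅redq0]
    obtain ⟨ms₂, C', zf, hrun₂, hzf, hf1, hf2, hcost₂⟩ :=
      ih (i+1) him' C₅ z1 hz1v (by rw [← hq1, hC₅redq1]) hs2
    have hrun : Run (ZipE d n₀ g) (d+2) C
        ([sv q0 x0, ld q1 x0, cpt q1 x1, .removeRed q0 x0, .removeRed q1 x0] ++ ms₂) C' := by
      refine run_append ?_ hrun₂
      exact .cons hleg₁ hC₁valid (.cons hleg₂ hC₂valid (.cons hleg₃ hC₃valid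
        (.cons (legal_rmRed _ _ _) hC₄valid (.cons (legal_rmRed _ _ _) hC₅valid (.nil _)))))
    refine ⟨_, C', zf, hrun, by omega, ?_, ?_, ?_⟩
    · have e : i + (m+1) = (i+1) + m := by omega
      rw [e]; exact hf1
    · have e : i + (m+1) + 1 = (i+1) + m + 1 := by omega
      rw [e]; exact hf2
    · rw [cost_append, hcost₂]
      simp [cost, moveCost, sv, ld, cpt]
      ring

end Aux
namespace Aux
open MPP

theorem final (d n₀ g : ℕ) (hd : 0 < d) (hn : 0 < n₀) (hg : 0 < g) :
    ∃ ms : List (MPP.Move (ZipV d n₀ g) 2),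
      MPP.IsPebbling (ZipE d n₀ g) (d + 2) ms ∧
      MPP.cost g ms ≤ (1 + 2 * g) * n₀ + 2 * d * (2 * g + 1) := by
  have hq2 : ∀ q : Fin 2, q = 0 ∨ q = 1 := by decide
  -- Phase A : build group S₁ on processor 0
  have hinit_valid : Valid (d+2) (init (ZipV d n₀ g) 2) := by
    intro q; simp [init]
  obtain ⟨msA, CA, hrunA, hredA, hblueA, hcostA⟩ :=
    buildSet (d := d) (n₀ := n₀) hg 0 (GA d) (init _ 2) hinit_valid
      (by simp [init, GA_card]) (by simp [init])
  have hCA0 : CA.red 0 = Uof d n₀ g (GA d) := by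
    rw [hredA, Function.update_self]
    show ∅ ∪ _ = _
    rw [Finset.empty_union]
  have hCA1 : CA.red 1 = ∅ := by
    rw [hredA, Function.update_of_ne (by decide)]; rfl
  have hCAvalid : Valid (d+2) CA := by
    intro q
    rcases hq2 q with rfl | rfl
    · rw [hCA0, Uof_card, GA_card]; omega
    · rw [hCA1]; simp
  -- Phase B : build group S₂ on processor 1
  obtain ⟨msB, CB, hrunB, hredB, hblueB, hcostB⟩ :=
    buildSet (d := d) (n₀ := n₀) hg 1 (GB d) CA hCAvalid
      (by rw [hCA1]; simp [GB_card]) (by rw [hCA1]; simp)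
  have hCB1 : CB.red 1 = Uof d n₀ g (GB d) := by
    rw [hredB, Function.update_self, hCA1, Finset.empty_union]
  have hCB0 : CB.red 0 = Uof d n₀ g (GA d) := by
    rw [hredB, Function.update_of_ne (by decide), hCA0]
  have hCBvalid : Valid (d+2) CB := by
    intro q
    rcases hq2 q with rfl | rfl
    · rw [hCB0, Uof_card, GA_card]; omega
    · rw [hCB1, Uof_card, GB_card]; omega
  -- compute v 0 on processor 0
  set z00 : Fin n₀ := ⟨0, hn⟩ with hz00
  set mv0 : Move (ZipV d n₀ g) 2 := cpt 0 (ZipV.v z00) with hmv0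
  have hleg0 : Legal (ZipE d n₀ g) CB mv0 := by
    refine legal_cpt (by norm_num) ?_
    intro u hu
    cases u with
    | w j' t' => exact hu.elim
    | v i' =>
      exfalso
      have h0 : (0:ℕ) = (i':ℕ) + 1 := hu
      omega
    | u j' =>
      rcases hu with ⟨ha, _⟩ | ⟨_, hb⟩
      · rw [hCB0]; exact u_mem_Uof (mem_GA.2 ha)
      · exfalso
        have h0 : (0:ℕ) % 2 = 1 := hb
        omega
  set CC := apply mv0 CB with hCCdef
  have hCCred : CC.red = Function.update CB.red 0 (insert (ZipV.v z00) (CB.red 0)) := by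
    rw [hCCdef, hmv0, apply_cpt]
  have hCCblue : CC.blue = CB.blue := by rw [hCCdef, hmv0, apply_cpt]
  have hCC0 : CC.red 0 = insert (ZipV.v z00) (Uof d n₀ g (GA d)) := by
    rw [hCCred, Function.update_self, hCB0]
  have hCC1 : CC.red 1 = Uof d n₀ g (GB d) := by
    rw [hCCred, Function.update_of_ne (by decide), hCB1]
  have hCCvalid : Valid (d+2) CC := by
    intro q
    rcases hq2 q with rfl | rfl
    · rw [hCC0]
      have := Finset.card_insert_le (ZipV.v z00) (Uof d n₀ g (GA d))
      rw [Uof_card, GA_card] at this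
      omega
    · rw [hCC1, Uof_card, GB_card]; omega
  -- the main chain
  have hs0 : side 0 = 0 := by decide
  have hs1 : side 1 = 1 := by decide
  have hg0 : grp d n₀ g 0 = Uof d n₀ g (GA d) := by
    rw [grp, if_pos (by norm_num)]
  have him : 0 + (n₀ - 1) < n₀ := by omega
  obtain ⟨msC, CF, zf, hrunC, hzf, hf1, hf2, hcostC⟩ :=
    chain (d := d) (g := g) hn (n₀ - 1) 0 him CC z00 rfl
      (by rw [hs0, hg0, hCC0])
      (by simp only [Nat.zero_add]; rw [hs1, grp, if_neg (by norm_num), hCC1])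
  simp only [Nat.zero_add] at hzf hf1 hf2
  -- assemble
  refine ⟨msA ++ (msB ++ ([mv0] ++ msC)), ⟨CF, ?_, ?_⟩, ?_⟩
  · exact run_append hrunA (run_append hrunB
      (run_append (run_one hleg0 (hCCdef ▸ hCCvalid)) hrunC))
  · -- Terminal
    intro x hx
    have hAll : ∀ j : Fin (2*d), ∃ q, ZipV.u j ∈ CF.red q := by
      intro j
      by_cases hj : (j:ℕ) < d
      · have hm : ZipV.u j ∈ Uof d n₀ g (GA d) := u_mem_Uof (mem_GA.2 hj)
        by_cases hp : (n₀-1) % 2 = 0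
        · exact ⟨side (n₀-1), by
            rw [hf1]
            exact Finset.mem_insert_of_mem (by rw [grp, if_pos hp]; exact hm)⟩
        · exact ⟨side (n₀-1+1), by
            rw [hf2, grp, if_pos (by omega)]; exact hm⟩
      · have hm : ZipV.u j ∈ Uof d n₀ g (GB d) := u_mem_Uof (mem_GB.2 (by omega))
        by_cases hp : (n₀-1) % 2 = 0
        · exact ⟨side (n₀-1+1), by
            rw [hf2, grp, if_neg (by omega)]; exact hm⟩
        · exact ⟨side (n₀-1), by
            rw [hf1]
            exact Finset.mem_insert_of_mem (by rw [grp, if_neg hp]; exact hm)⟩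
    cases x with
    | u j => exact Or.inr (hAll j)
    | v i =>
      right
      by_cases hi : (i:ℕ) = n₀ - 1
      · refine ⟨side (n₀-1), ?_⟩
        have hiz : i = zf := Fin.ext (by omega)
        rw [hiz, hf1]
        exact Finset.mem_insert_self _ _
      · exfalso
        have hlt : (i:ℕ) + 1 < n₀ := by omega
        exact hx (ZipV.v ⟨(i:ℕ)+1, hlt⟩) rfl
    | w j t =>
      exfalso
      by_cases htv : (t:ℕ)+1 < 2*g
      · exact hx (ZipV.w j ⟨(t:ℕ)+1, htv⟩) ⟨rfl, rfl⟩
      · exact hx (ZipV.u j) ⟨rfl, by omega⟩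
  · -- cost bound
    rw [GA_card] at hcostA
    rw [GB_card] at hcostB
    rw [cost_append, cost_append, cost_append, hcostA, hcostB, hcostC]
    have hmv0cost : cost g [mv0] = 1 := by simp [cost, moveCost, hmv0, cpt]
    rw [hmv0cost]
    have e1 : (1 + 2*g) * n₀ = (n₀-1) * (2*g+1) + (2*g+1) := by
      nth_rw 1 [show n₀ = (n₀ - 1) + 1 from by omega]
      ring
    have e2 : 2*d*(2*g+1) = d*(2*g+1) + d*(2*g+1) := by ring
    have e3 : (1:ℕ) ≤ 2*g+1 := by omega
    rw [e1, e2]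
    linarith

end Aux
/-- For all `d, n₀, g ∈ ℤ⁺`, the zipper gadget `Z(d,n₀,g)` with
`k = 2` processors and memory bound `r = d+2` per processor admits an MPP
pebbling strategy of total cost at most `(1 + 2g)·n₀ + 2d·(2g+1)`. -/
theorem stmt16 (d n₀ g : ℕ) (hd : 0 < d) (hn : 0 < n₀) (hg : 0 < g) :
    ∃ ms : List (MPP.Move (ZipV d n₀ g) 2),
      MPP.IsPebbling (ZipE d n₀ g) (d + 2) ms ∧
      MPP.cost g ms ≤ (1 + 2 * g) * n₀ + 2 * d * (2 * g + 1) := by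
  exact Aux.final d n₀ g hd hn hg
end

section
/- Consider the level gadget on nodes u₁,…,u_ℓ (first level) and v₁,…,v_{ℓ'} (second level) inside a DAG, where the gadget's edges are: (u_i,u_{i+1}) for i<ℓ, (v_i,v_{i+1}) for i<ℓ', (u_i,v_i) for i ≤ min(ℓ,ℓ'), (u_ℓ,v₁), and, if ℓ > ℓ', (u_i,v_{ℓ'}) for ℓ' < i ≤ ℓ; moreover all in-neighbors of the v-nodes lie in the gadget. In SPP with any memory bound r ≥ max(ℓ,ℓ')+1, from any configuration in which exactly the nodes u₁,…,u_ℓ of the gadget carry red pebbles, there is a sequence consisting only of (R3-S) and (R4-S) moves (no I/O) after which exactly v₁,…,v_{ℓ'} of the gadget carry red pebbles, such that at every intermediate configuration the number of red pebbles on the gadget is at most max(ℓ,ℓ')+1. -/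
namespace SPP

variable {V : Type*} [DecidableEq V]

/-- A configuration of single-processor red-blue pebbling. -/
structure Conf (V : Type*) where
  red : Finset V
  blue : Finset V

/-- Moves of single-processor red-blue pebbling: `load` is (R1-S), `save` is
(R2-S), `compute` is (R3-S), and the removals are (R4-S). -/
inductive Move (V : Type*) where
  | load (v : V)
  | save (v : V)
  | compute (v : V)
  | removeRed (v : V)
  | removeBlue (v : V)

/-- The effect of a move on a configuration. -/
def apply : Move V → Conf V → Conf V
  | .load v, C => ⟨insert v C.red, C.blue⟩
  | .save v, C => ⟨C.red, insert v C.blue⟩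
  | .compute v, C => ⟨insert v C.red, C.blue⟩
  | .removeRed v, C => ⟨C.red.erase v, C.blue⟩
  | .removeBlue v, C => ⟨C.red, C.blue.erase v⟩

/-- When a move may legally be performed. -/
def Legal (E : V → V → Prop) : Conf V → Move V → Prop
  | C, .load v => v ∈ C.blue
  | C, .save v => v ∈ C.red
  | C, .compute v => ∀ u, E u v → u ∈ C.red
  | _, .removeRed _ => True
  | _, .removeBlue _ => True

/-- A configuration respects the fast-memory bound `r`. -/
def Valid (r : ℕ) (C : Conf V) : Prop := C.red.card ≤ r

/-- `Run E r C ms C'` : starting from configuration `C`, the list of moves `ms`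
may be legally executed (respecting the memory bound `r` throughout) and leads
to configuration `C'`. -/
inductive Run (E : V → V → Prop) (r : ℕ) : Conf V → List (Move V) → Conf V → Prop
  | nil (C : Conf V) : Run E r C [] C
  | cons {C C'' : Conf V} {mv : Move V} {ms : List (Move V)} :
      Legal E C mv → Valid r (apply mv C) → Run E r (apply mv C) ms C'' →
      Run E r C (mv :: ms) C''

def isIO : Move V → Bool
  | .load _ => true
  | .save _ => true
  | _ => false

/-- The number of I/O moves (of type (R1-S) or (R2-S)) in a sequence of moves. -/
def ioCount (ms : List (Move V)) : ℕ := (ms.filter isIO).length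

def isComputeOrRemove : Move V → Bool
  | .compute _ => true
  | .removeRed _ => true
  | .removeBlue _ => true
  | _ => false

/-- A sink of the DAG: a node with no outgoing edge. -/
def IsSink (E : V → V → Prop) (v : V) : Prop := ∀ u, ¬ E v u

/-- A terminal configuration: every sink carries a pebble. -/
def Terminal (E : V → V → Prop) (C : Conf V) : Prop :=
  ∀ v, IsSink E v → v ∈ C.blue ∨ v ∈ C.red

/-- The initial (empty) configuration. -/
def init (V : Type*) : Conf V := ⟨∅, ∅⟩

/-- `ms` is an SPP pebbling strategy with memory bound `r`. -/
def IsPebbling (E : V → V → Prop) (r : ℕ) (ms : List (Move V)) : Prop :=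
  ∃ Cf, Run E r (init V) ms Cf ∧ Terminal E Cf

end SPP

/-!
Sweep the gadget left to right. At stage `i` the red pebbles sit on `v 0, …, v (i-1)` and
`u i, …, u (ℓ-1)`; stage `i + 1` is reached by computing `v i`, whose in-neighbours `v (i-1)`,
`u i`, `u (ℓ-1)` (when `i = 0`) and `u j` for `j ≥ ℓ'` (when `i = ℓ' - 1`) are all still red,
and then deleting `u i`. A stage holds at most `max ℓ ℓ'` red pebbles, so the peak between
the two moves is `max ℓ ℓ' + 1`.
-/

namespace SPP

variable {V : Type*} [DecidableEq V]

def QuietRun (E : V → V → Prop) (r b : ℕ) (C : Conf V) (ms : List (Move V)) (C' : Conf V) :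
    Prop :=
  (∀ mv ∈ ms, isComputeOrRemove mv = true) ∧ Run E r C ms C' ∧
    ∀ D ∈ ms.scanl (fun Cc mv => apply mv Cc) C, D.red.card ≤ b

namespace QuietRun

variable {E : V → V → Prop} {r b : ℕ} {C C' C'' : Conf V} {ms ms' : List (Move V)}

theorem nil (hC : C.red.card ≤ b) : QuietRun E r b C [] C :=
  ⟨by simp, .nil C, by simpa using hC⟩

theorem single {mv : Move V} (hmv : isComputeOrRemove mv = true) (hlegal : Legal E C mv)
    (hC : C.red.card ≤ b) (hC' : (apply mv C).red.card ≤ b) (hbr : b ≤ r) :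
    QuietRun E r b C [mv] (apply mv C) :=
  ⟨by simpa using hmv, .cons hlegal (hC'.trans hbr) (.nil _), by simp [hC, hC']⟩

theorem append (h₁ : QuietRun E r b C ms C') (h₂ : QuietRun E r b C' ms' C'') :
    QuietRun E r b C (ms ++ ms') C'' := by
  obtain ⟨hms, hrun, hcard⟩ := h₁
  induction hrun with
  | nil => simpa using h₂
  | cons hlegal hvalid _ ih =>
    obtain ⟨hms', hrun', hcard'⟩ :=
      ih h₂ (fun mv h => hms mv (by simp [h])) (fun D hD => hcard D (by simp [hD]))
    refine ⟨fun mv h => ?_, .cons hlegal hvalid hrun', fun D hD => ?_⟩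
    · simp only [List.cons_append, List.mem_cons] at h
      exact h.elim (fun h => hms mv (by simp [h])) (hms' mv)
    · simp only [List.cons_append, List.scanl_cons, List.mem_cons] at hD
      exact hD.elim (fun h => hcard D (by simp [h])) (hcard' D)

end QuietRun

section LevelGadget

open Finset

variable {ℓ ℓ' : ℕ} (u : Fin ℓ → V) (v : Fin ℓ' → V)

def levelRed (a b : ℕ) : Finset V :=
  (univ.filter fun j : Fin ℓ' => (j : ℕ) < a).image v ∪
    (univ.filter fun j : Fin ℓ => b ≤ (j : ℕ)).image u

def IsLevelPred (i : Fin ℓ') (x : V) : Prop :=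
  (∃ i' : Fin ℓ', x = v i' ∧ (i : ℕ) = (i' : ℕ) + 1) ∨
    ∃ j : Fin ℓ, x = u j ∧
      ((j : ℕ) = (i : ℕ) ∨ ((j : ℕ) = ℓ - 1 ∧ (i : ℕ) = 0) ∨
        (ℓ' < ℓ ∧ ℓ' ≤ (j : ℕ) ∧ (i : ℕ) = ℓ' - 1))

variable {u v}

theorem mem_levelRed {a b : ℕ} {x : V} :
    x ∈ levelRed u v a b ↔
      (∃ j : Fin ℓ', (j : ℕ) < a ∧ v j = x) ∨ ∃ j : Fin ℓ, b ≤ (j : ℕ) ∧ u j = x := by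
  simp [levelRed]

variable (u v)

theorem card_levelRed_le (a b : ℕ) : (levelRed u v a b).card ≤ min ℓ' a + (ℓ - b) := by
  have hge : #{j : Fin ℓ | b ≤ (j : ℕ)} = ℓ - b := by
    have := card_filter_add_card_filter_not (s := univ) (fun j : Fin ℓ => (j : ℕ) < b)
    simp only [not_lt, Fin.card_filter_val_lt, card_univ, Fintype.card_fin] at this
    omega
  calc (levelRed u v a b).card
      ≤ #((univ.filter fun j : Fin ℓ' => (j : ℕ) < a).image v) +
          #((univ.filter fun j : Fin ℓ => b ≤ (j : ℕ)).image u) := card_union_le _ _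
    _ ≤ #{j : Fin ℓ' | (j : ℕ) < a} + #{j : Fin ℓ | b ≤ (j : ℕ)} :=
        add_le_add card_image_le card_image_le
    _ = min ℓ' a + (ℓ - b) := by rw [Fin.card_filter_val_lt, hge]

theorem coe_levelRed_zero_zero : (levelRed u v 0 0 : Set V) = Set.range u := by
  ext x
  simp [mem_levelRed]

theorem coe_levelRed_of_le {a b : ℕ} (ha : ℓ' ≤ a) (hb : ℓ ≤ b) :
    (levelRed u v a b : Set V) = Set.range v := by
  ext x
  simp only [Finset.mem_coe, mem_levelRed, Set.mem_range]
  constructor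
  · rintro (⟨j, -, rfl⟩ | ⟨j, hj, -⟩)
    · exact ⟨j, rfl⟩
    · exact absurd j.isLt (by omega)
  · rintro ⟨j, rfl⟩
    exact .inl ⟨j, by omega, rfl⟩

theorem insert_levelRed {a : ℕ} (ha : a < ℓ') (b : ℕ) :
    insert (v ⟨a, ha⟩) (levelRed u v a b) = levelRed u v (a + 1) b := by
  ext x
  simp only [mem_insert, mem_levelRed, Nat.lt_succ_iff_lt_or_eq]
  constructor
  · rintro (rfl | ⟨j, hj, rfl⟩ | h)
    · exact .inl ⟨_, .inr rfl, rfl⟩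
    · exact .inl ⟨j, .inl hj, rfl⟩
    · exact .inr h
  · rintro (⟨j, hj | hj, rfl⟩ | h)
    · exact .inr (.inl ⟨j, hj, rfl⟩)
    · exact .inl (congrArg v (Fin.ext hj.symm)).symm
    · exact .inr (.inr h)

theorem levelRed_succ_left_of_le {a : ℕ} (ha : ℓ' ≤ a) (b : ℕ) :
    levelRed u v (a + 1) b = levelRed u v a b := by
  ext x
  simp only [mem_levelRed]
  constructor <;> rintro (⟨j, hj, rfl⟩ | h)
  all_goals first | exact .inr h | exact .inl ⟨j, by omega, rfl⟩

variable {u v}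

theorem erase_levelRed (hu : Function.Injective u) (hdisj : ∀ i j, u i ≠ v j) (a : ℕ) {b : ℕ}
    (hb : b < ℓ) : (levelRed u v a b).erase (u ⟨b, hb⟩) = levelRed u v a (b + 1) := by
  ext x
  simp only [mem_erase, mem_levelRed]
  constructor
  · rintro ⟨hne, h | ⟨j, hj, rfl⟩⟩
    · exact .inl h
    · refine .inr ⟨j, ?_, rfl⟩
      have : (j : ℕ) ≠ b := fun h => hne (congrArg u (Fin.ext h))
      omega
  · rintro (⟨j, hj, rfl⟩ | ⟨j, hj, rfl⟩)
    · exact ⟨(hdisj _ j).symm, .inl ⟨j, hj, rfl⟩⟩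
    · refine ⟨fun h => ?_, .inr ⟨j, by omega, rfl⟩⟩
      have := congrArg Fin.val (hu h)
      simp only at this
      omega

theorem levelRed_succ_right_of_le (a : ℕ) {b : ℕ} (hb : ℓ ≤ b) :
    levelRed u v a (b + 1) = levelRed u v a b := by
  ext x
  simp only [mem_levelRed]
  constructor <;> rintro (h | ⟨j, hj, rfl⟩)
  all_goals first | exact .inl h | exact absurd j.isLt (by omega)

variable {E : V → V → Prop}

theorem legal_compute_levelRed
    (hin : ∀ i x, E x (v i) → IsLevelPred u v i x)
    {a b : ℕ} (ha : a < ℓ') (hba : b ≤ a) (B : Finset V) :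
    Legal E ⟨levelRed u v a b, B⟩ (.compute (v ⟨a, ha⟩)) := by
  intro x hx
  refine mem_levelRed.2 ?_
  rcases hin _ x hx with ⟨i', rfl, hi'⟩ | ⟨j, rfl, hj⟩
  · exact .inl ⟨i', by simp only at hi'; omega, rfl⟩
  · exact .inr ⟨j, by simp only at hj; omega, rfl⟩

variable {r K : ℕ}

theorem exists_quietRun_levelRed_succ_left
    (hin : ∀ i x, E x (v i) → IsLevelPred u v i x)
    {a b : ℕ} (hba : b ≤ a) (hK : (levelRed u v (a + 1) b).card ≤ K) (hKr : K ≤ r)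
    (B : Finset V) :
    ∃ ms, QuietRun E r K ⟨levelRed u v a b, B⟩ ms ⟨levelRed u v (a + 1) b, B⟩ := by
  by_cases ha : a < ℓ'
  · rw [← insert_levelRed u v ha] at hK ⊢
    exact ⟨[.compute (v ⟨a, ha⟩)], .single rfl (legal_compute_levelRed hin ha hba B)
      ((card_le_card (subset_insert _ _)).trans hK) hK hKr⟩
  · rw [levelRed_succ_left_of_le u v (not_lt.1 ha)] at hK ⊢
    exact ⟨[], .nil hK⟩

theorem exists_quietRun_levelRed_succ_right (hu : Function.Injective u)
    (hdisj : ∀ i j, u i ≠ v j) {a b : ℕ} (hK : (levelRed u v a b).card ≤ K) (hKr : K ≤ r)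
    (B : Finset V) :
    ∃ ms, QuietRun E r K ⟨levelRed u v a b, B⟩ ms ⟨levelRed u v a (b + 1), B⟩ := by
  by_cases hb : b < ℓ
  · rw [← erase_levelRed hu hdisj a hb]
    exact ⟨[.removeRed (u ⟨b, hb⟩)], .single rfl trivial hK (card_erase_le.trans hK) hKr⟩
  · rw [levelRed_succ_right_of_le a (not_lt.1 hb)]
    exact ⟨[], .nil hK⟩

theorem exists_quietRun_levelRed_diag (hu : Function.Injective u) (hdisj : ∀ i j, u i ≠ v j)
    (hin : ∀ i x, E x (v i) → IsLevelPred u v i x)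
    (hr : max ℓ ℓ' + 1 ≤ r) (B : Finset V) {i : ℕ} (hi : i ≤ max ℓ ℓ') :
    ∃ ms, QuietRun E r (max ℓ ℓ' + 1) ⟨levelRed u v 0 0, B⟩ ms ⟨levelRed u v i i, B⟩ := by
  induction i with
  | zero => exact ⟨[], .nil ((card_levelRed_le u v 0 0).trans (by omega))⟩
  | succ i ih =>
    have hpeak : (levelRed u v (i + 1) i).card ≤ max ℓ ℓ' + 1 :=
      (card_levelRed_le u v _ _).trans (by omega)
    obtain ⟨ms₁, h₁⟩ := ih (by omega)
    obtain ⟨ms₂, h₂⟩ := exists_quietRun_levelRed_succ_left hin le_rfl hpeak hr B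
    obtain ⟨ms₃, h₃⟩ := exists_quietRun_levelRed_succ_right hu hdisj hpeak hr B
    exact ⟨ms₁ ++ ms₂ ++ ms₃, (h₁.append h₂).append h₃⟩

end LevelGadget

end SPP

theorem stmt18_general {V : Type} [DecidableEq V] (E : V → V → Prop)
    (ℓ ℓ' r : ℕ) (hr : max ℓ ℓ' + 1 ≤ r)
    (u : Fin ℓ → V) (v : Fin ℓ' → V)
    (hu : Function.Injective u)
    (hdisj : ∀ i j, u i ≠ v j)
    (hin : ∀ (i : Fin ℓ') (x : V), E x (v i) ↔
        ((∃ i' : Fin ℓ', x = v i' ∧ (i : ℕ) = (i' : ℕ) + 1) ∨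
         (∃ j : Fin ℓ, x = u j ∧
            ((j : ℕ) = (i : ℕ) ∨ ((j : ℕ) = ℓ - 1 ∧ (i : ℕ) = 0) ∨
             (ℓ' < ℓ ∧ ℓ' ≤ (j : ℕ) ∧ (i : ℕ) = ℓ' - 1)))))
    (C : SPP.Conf V) (hC : (C.red : Set V) = Set.range u) :
    ∃ ms : List (SPP.Move V),
      (∀ mv ∈ ms, SPP.isComputeOrRemove mv = true) ∧
      ∃ C' : SPP.Conf V, SPP.Run E r C ms C' ∧
        (C'.red : Set V) = Set.range v ∧ C'.blue = C.blue ∧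
        ∀ D ∈ ms.scanl (fun Cc mv => SPP.apply mv Cc) C,
          D.red.card ≤ max ℓ ℓ' + 1 := by
  obtain ⟨red, blue⟩ := C
  obtain rfl : red = SPP.levelRed u v 0 0 :=
    Finset.coe_injective (hC.trans (SPP.coe_levelRed_zero_zero u v).symm)
  obtain ⟨ms, hms, hrun, hcard⟩ :=
    SPP.exists_quietRun_levelRed_diag hu hdisj (fun i x => (hin i x).1) hr blue le_rfl
  exact ⟨ms, hms, _, hrun,
    SPP.coe_levelRed_of_le u v (le_max_right ℓ ℓ') (le_max_left ℓ ℓ'), rfl, hcard⟩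

/-- the level gadget. Inside a DAG `(V, E)`, consider nodes
`u 0, …, u (ℓ−1)` (first level) and `v 0, …, v (ℓ'−1)` (second level, 0-based)
whose gadget edges are: `(u i, u (i+1))`, `(v i, v (i+1))`, `(u i, v i)` for
`i < min ℓ ℓ'`, `(u (ℓ−1), v 0)`, and, if `ℓ > ℓ'`, `(u i, v (ℓ'−1))` for
`ℓ' ≤ i < ℓ`; moreover all in-neighbors of the `v`-nodes lie in the gadget (the
hypothesis `hin` characterizes the in-neighborhood of each `v i` exactly). In
SPP with any memory bound `r ≥ max ℓ ℓ' + 1`, from any configuration whose red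
pebbles are exactly `u 0, …, u (ℓ−1)`, there is a sequence consisting only of
(R3-S) and (R4-S) moves (no I/O) after which exactly `v 0, …, v (ℓ'−1)` carry
red pebbles, such that at every intermediate configuration the number of red
pebbles is at most `max ℓ ℓ' + 1`. -/
theorem stmt18 {V : Type} [Fintype V] [DecidableEq V] (E : V → V → Prop)
    (hdag : Irreflexive (Relation.TransGen E))
    (ℓ ℓ' r : ℕ) (hℓ : 0 < ℓ) (hℓ' : 0 < ℓ') (hr : max ℓ ℓ' + 1 ≤ r)
    (u : Fin ℓ → V) (v : Fin ℓ' → V)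
    (hu : Function.Injective u) (hv : Function.Injective v)
    (hdisj : ∀ i j, u i ≠ v j)
    (hchainU : ∀ i i' : Fin ℓ, (i' : ℕ) = (i : ℕ) + 1 → E (u i) (u i'))
    (hin : ∀ (i : Fin ℓ') (x : V), E x (v i) ↔
        ((∃ i' : Fin ℓ', x = v i' ∧ (i : ℕ) = (i' : ℕ) + 1) ∨
         (∃ j : Fin ℓ, x = u j ∧
            ((j : ℕ) = (i : ℕ) ∨ ((j : ℕ) = ℓ - 1 ∧ (i : ℕ) = 0) ∨
             (ℓ' < ℓ ∧ ℓ' ≤ (j : ℕ) ∧ (i : ℕ) = ℓ' - 1)))))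
    (C : SPP.Conf V) (hC : (C.red : Set V) = Set.range u) :
    ∃ ms : List (SPP.Move V),
      (∀ mv ∈ ms, SPP.isComputeOrRemove mv = true) ∧
      ∃ C' : SPP.Conf V, SPP.Run E r C ms C' ∧
        (C'.red : Set V) = Set.range v ∧ C'.blue = C.blue ∧
        ∀ D ∈ ms.scanl (fun Cc mv => SPP.apply mv Cc) C,
          D.red.card ≤ max ℓ ℓ' + 1 :=
  stmt18_general E ℓ ℓ' r hr u v hu hdisj hin C hC
end
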